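/- Define τ : P^c ⊗ P* → P by τ(a,p) = p + a (the greatest lower bound). Then τ is a surjective projection: it is order-preserving, surjective, and for every (a,p) and q ≤ τ(a,p) in P there is (b,q') ≤ (a,p) in P^c ⊗ P* with τ(b,q') ≤ q. -/
import Mathlib


/-- `τ(a,p) := p + a` is a surjective projection from `P^c ⊗ P*` onto `P`:
it is order-preserving, surjective, and for every `(a,p)` and `q ≤ τ(a,p)`
there is `(b,q') ≤ (a,p)` in `P^c ⊗ P*` with `τ(b,q') ≤ q`. -/
theorem stmt12 {P : Type*} (le lec lestar : P → P → Prop)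
    (Pc : Set P) (even : P → P) (plus : P → P → P)
    (hle_refl : ∀ p, le p p)
    (hle_trans : ∀ p q r, le r q → le q p → le r p)
    (hevenPc : ∀ p, even p ∈ Pc)
    (hple : ∀ p, le p (even p))
    (hevenmono : ∀ p q, le q p → lec (even q) (even p))
    (hevenfix : ∀ a ∈ Pc, even a = a)
    (hstar_le : ∀ p q, lestar q p → le q p)
    (hstar_even : ∀ p q, lestar q p → even q = even p)
    (hlec_le : ∀ a b, lec b a → le b a)
    (hplus : ∀ a ∈ Pc, ∀ p : P, (∃ r, le r a ∧ le r p) →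
      le (plus p a) p ∧ le (plus p a) a ∧ ∀ z, le z p → le z a → le z (plus p a))
    (hpluseven : ∀ p, plus p (even p) = p)
    -- the interpolation lemma: for q ≤ p, with b = even q, there is q' with
    -- q ≤ q' , q' ≤* p, and q ≤ q' + b ≤ q
    (hinterp : ∀ p q, le q p → ∃ q', le q q' ∧ lestar q' p ∧
      (∃ r, le r (even q) ∧ le r q') ∧
      le q (plus q' (even q)) ∧ le (plus q' (even q)) q) :
    -- order-preserving for the ⊗-order
    (∀ a p b q : P, a ∈ Pc → b ∈ Pc →
      (∃ r, le r a ∧ le r p) → (∃ r, le r b ∧ le r q) →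
      lec b a → lestar q p → le (plus q b) (plus p a)) ∧
    -- surjectivity
    (∀ r : P, ∃ a ∈ Pc, ∃ p : P, (∃ s, le s a ∧ le s p) ∧ plus p a = r) ∧
    -- the projection property
    (∀ a ∈ Pc, ∀ p : P, (∃ r, le r a ∧ le r p) →
      ∀ q, le q (plus p a) →
        ∃ b ∈ Pc, ∃ q' : P, (∃ s, le s b ∧ le s q') ∧
          lec b a ∧ lestar q' p ∧ le (plus q' b) q) := by
  refine ⟨?_, ?_, ?_⟩
  · intro a p b q ha hb hcpa hcqb hba hqp
    obtain ⟨hqb1, hqb2, _⟩ := hplus b hb q hcqb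
    obtain ⟨_, _, hlub⟩ := hplus a ha p hcpa
    exact hlub _ (hle_trans _ _ _ hqb1 (hstar_le _ _ hqp))
      (hle_trans _ _ _ hqb2 (hlec_le _ _ hba))
  · intro r
    exact ⟨even r, hevenPc r, r, ⟨r, hple r, hle_refl r⟩, hpluseven r⟩
  · intro a ha p hc q hq
    obtain ⟨hpa1, hpa2, _⟩ := hplus a ha p hc
    have hqp : le q p := hle_trans _ _ _ hq hpa1
    have hqa : le q a := hle_trans _ _ _ hq hpa2
    obtain ⟨q', hqq', hq'p, hcomp, _, hle2⟩ := hinterp p q hqp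
    refine ⟨even q, hevenPc q, q', hcomp, ?_, hq'p, hle2⟩
    have := hevenmono a q hqa
    rwa [hevenfix a ha] at this
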